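/- Let δ ∈ (0, 1], M ≥ 0, and r > 0 be real numbers, and let y : ℝ → ℝ be twice differentiable with δ ≤ y(x) ≤ 1, 0 ≤ y′(x) ≤ M for all x ∈ [0, 1], and |y″(x)| ≤ y′(x)/(1 − x) for all x ∈ [0, 1). Define η(ρ) := 2 √(y(ρ/r)) for ρ ∈ [0, r]. Then there exists a constant C ≥ 0, depending only on δ and M (one may take C = 1/√δ + M/(2 δ^{3/2})), such that for every ρ ∈ [0, r) one has |η″(ρ)| ≤ C · η′(ρ)/(r − ρ). -/

import Mathlib

/-!
Write `η = 2√u` with `u ρ = y (ρ / r)`, so that `η' = u' / √u` and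
`η'' = u'' / √u - u'² / (2 (√u)³)`. Rescaled, the growth condition on `y''` reads
`|u''| (r - ρ) ≤ u'`, which bounds the first term by `η' / (r - ρ)`. The second term is
`η' · u' / (2u)`, and `u ≥ δ`, `u' (r - ρ) ≤ M` bound it by `(M / (2δ)) η' / (r - ρ)`.
Hence `C = 1 + M / (2δ)` works.
-/

open Real Filter Topology

theorem deriv_comp_div_const (f : ℝ → ℝ) (r x : ℝ) :
    deriv (fun s => f (s / r)) x = deriv f (x / r) / r := by
  simpa only [div_eq_inv_mul, smul_eq_mul] using deriv_comp_mul_left r⁻¹ f x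

section TwoMulSqrt

variable {u : ℝ → ℝ} {s : ℝ}

theorem hasDerivAt_two_mul_sqrt {u' : ℝ} (hu : HasDerivAt u u' s) (hs : 0 < u s) :
    HasDerivAt (fun t => 2 * √(u t)) (u' / √(u s)) s := by
  refine ((hu.sqrt hs.ne').const_mul 2).congr_deriv ?_
  field_simp

theorem deriv_deriv_two_mul_sqrt (hu : ∀ᶠ t in 𝓝 s, DifferentiableAt ℝ u t)
    (hu' : DifferentiableAt ℝ (deriv u) s) (hs : 0 < u s) :
    deriv (deriv fun t => 2 * √(u t)) s =
      deriv (deriv u) s / √(u s) - deriv u s ^ 2 / (2 * √(u s) ^ 3) := by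
  have hpos : ∀ᶠ t in 𝓝 s, 0 < u t :=
    continuousAt_const.eventually_lt hu.self_of_nhds.continuousAt hs
  have hderiv : deriv (fun t => 2 * √(u t)) =ᶠ[𝓝 s] fun t => deriv u t / √(u t) :=
    (hu.and hpos).mono fun t ⟨hut, ht⟩ => (hasDerivAt_two_mul_sqrt hut.hasDerivAt ht).deriv
  have hsqrt := hu.self_of_nhds.hasDerivAt.sqrt hs.ne'
  have hsqrt_pos : 0 < √(u s) := sqrt_pos.mpr hs
  rw [hderiv.deriv_eq, (hu'.hasDerivAt.fun_div hsqrt hsqrt_pos.ne').deriv]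
  field_simp

theorem abs_deriv_deriv_two_mul_sqrt_le {δ d L : ℝ} (hu : ∀ᶠ t in 𝓝 s, DifferentiableAt ℝ u t)
    (hu' : DifferentiableAt ℝ (deriv u) s) (hδ : 0 < δ) (hδu : δ ≤ u s) (hd : 0 < d)
    (hu'_nonneg : 0 ≤ deriv u s) (hu'_le : deriv u s * d ≤ L)
    (hu''_le : |deriv (deriv u) s| * d ≤ deriv u s) :
    |deriv (deriv fun t => 2 * √(u t)) s| ≤
      (1 + L / (2 * δ)) * deriv (fun t => 2 * √(u t)) s / d := by
  have hs : 0 < u s := hδ.trans_le hδu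
  rw [deriv_deriv_two_mul_sqrt hu hu' hs,
    (hasDerivAt_two_mul_sqrt hu.self_of_nhds.hasDerivAt hs).deriv]
  set S := √(u s)
  set a := deriv u s
  set c := deriv (deriv u) s
  have hS : 0 < S := sqrt_pos.mpr hs
  have hδS : δ ≤ S ^ 2 := by rwa [sq_sqrt hs.le]
  have hfirst : |c / S| ≤ a / S / d := by
    rw [abs_div, abs_of_pos hS, le_div_iff₀ hd, div_mul_eq_mul_div]
    gcongr
  have hsecond : a ^ 2 / (2 * S ^ 3) ≤ L / (2 * δ) * (a / S) / d := by
    have hL : 0 ≤ L := (mul_nonneg hu'_nonneg hd.le).trans hu'_le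
    have had : a ≤ L / d := (le_div_iff₀ hd).mpr hu'_le
    calc a ^ 2 / (2 * S ^ 3) = a / S * a / (2 * S ^ 2) := by field_simp
      _ ≤ a / S * (L / d) / (2 * δ) := by gcongr
      _ = L / (2 * δ) * (a / S) / d := by ring
  calc |c / S - a ^ 2 / (2 * S ^ 3)| ≤ |c / S| + a ^ 2 / (2 * S ^ 3) := by
        refine (abs_sub _ _).trans_eq ?_
        rw [abs_of_nonneg (by positivity : 0 ≤ a ^ 2 / (2 * S ^ 3))]
    _ ≤ a / S / d + L / (2 * δ) * (a / S) / d := add_le_add hfirst hsecond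
    _ = (1 + L / (2 * δ)) * (a / S) / d := by ring

end TwoMulSqrt

theorem eta_second_deriv_bound_general (δ M r : ℝ) (hδ : 0 < δ) (hM : 0 ≤ M)
    (hr : 0 < r) (y : ℝ → ℝ) (hy : Differentiable ℝ y)
    (hy' : Differentiable ℝ (deriv y))
    (hbounds : ∀ x ∈ Set.Icc (0 : ℝ) 1, δ ≤ y x ∧ y x ≤ 1)
    (hderiv : ∀ x ∈ Set.Icc (0 : ℝ) 1, 0 ≤ deriv y x ∧ deriv y x ≤ M)
    (hderiv2 : ∀ x ∈ Set.Ico (0 : ℝ) 1, |deriv (deriv y) x| ≤ deriv y x / (1 - x)) :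
    ∃ C : ℝ, 0 ≤ C ∧
      ∀ ρ ∈ Set.Ico (0 : ℝ) r,
        |deriv (deriv (fun s : ℝ => 2 * Real.sqrt (y (s / r)))) ρ| ≤
          C * deriv (fun s : ℝ => 2 * Real.sqrt (y (s / r))) ρ / (r - ρ) := by
  refine ⟨1 + M / (2 * δ), by positivity, fun ρ ⟨hρ0, hρr⟩ => ?_⟩
  have hd : 0 < r - ρ := sub_pos.mpr hρr
  have hx : ρ / r ∈ Set.Ico (0 : ℝ) 1 := ⟨by positivity, (div_lt_one hr).mpr hρr⟩
  obtain ⟨hy'_nonneg, hy'_le⟩ := hderiv _ (Set.Ico_subset_Icc_self hx)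
  have hy''_le : |deriv (deriv y) (ρ / r)| * ((r - ρ) / r) ≤ deriv y (ρ / r) := by
    have h := hderiv2 _ hx
    rwa [show 1 - ρ / r = (r - ρ) / r by field_simp, le_div_iff₀ (by positivity)] at h
  have hderiv_u : deriv (fun s => y (s / r)) = fun s => deriv y (s / r) / r :=
    funext (deriv_comp_div_const y r)
  have hy''_u : |deriv (deriv fun s => y (s / r)) ρ| = |deriv (deriv y) (ρ / r)| / r / r := by
    rw [hderiv_u, deriv_div_const, deriv_comp_div_const, abs_div, abs_div, abs_of_pos hr]
  have hu : Differentiable ℝ fun s => y (s / r) := by fun_prop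
  apply abs_deriv_deriv_two_mul_sqrt_le (u := fun s => y (s / r)) (.of_forall hu)
    (by rw [hderiv_u]; fun_prop) hδ (hbounds _ (Set.Ico_subset_Icc_self hx)).1 hd
  · rw [hderiv_u]; positivity
  · rw [hderiv_u, div_mul_eq_mul_div, div_le_iff₀ hr]
    exact mul_le_mul hy'_le (by linarith) hd.le hM
  · rw [hy''_u, hderiv_u]
    calc |deriv (deriv y) (ρ / r)| / r / r * (r - ρ)
        = |deriv (deriv y) (ρ / r)| * ((r - ρ) / r) / r := by ring
      _ ≤ deriv y (ρ / r) / r := by gcongr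

/-- Second radial derivative of `η = 2√(y(ρ/r))` is controlled by `η′/(r − ρ)`:
there exists `C ≥ 0` (one may take `C = 1/√δ + M/(2 δ^(3/2))`) with
`|η″(ρ)| ≤ C η′(ρ)/(r − ρ)` for every `ρ ∈ [0, r)`. -/
theorem eta_second_deriv_bound (δ M r : ℝ) (hδ : 0 < δ) (hδ1 : δ ≤ 1) (hM : 0 ≤ M)
    (hr : 0 < r) (y : ℝ → ℝ) (hy : Differentiable ℝ y)
    (hy' : Differentiable ℝ (deriv y))
    (hbounds : ∀ x ∈ Set.Icc (0 : ℝ) 1, δ ≤ y x ∧ y x ≤ 1)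
    (hderiv : ∀ x ∈ Set.Icc (0 : ℝ) 1, 0 ≤ deriv y x ∧ deriv y x ≤ M)
    (hderiv2 : ∀ x ∈ Set.Ico (0 : ℝ) 1, |deriv (deriv y) x| ≤ deriv y x / (1 - x)) :
    ∃ C : ℝ, 0 ≤ C ∧
      ∀ ρ ∈ Set.Ico (0 : ℝ) r,
        |deriv (deriv (fun s : ℝ => 2 * Real.sqrt (y (s / r)))) ρ| ≤
          C * deriv (fun s : ℝ => 2 * Real.sqrt (y (s / r))) ρ / (r - ρ) :=
  eta_second_deriv_bound_general δ M r hδ hM hr y hy hy' hbounds hderiv hderiv2
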